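/- arXiv:1506.08163 — 2 statements merged into one kernel-verified Lean document; each statement's English description precedes it below -/
import Mathlib

section
/- Let f : ℝ^p → ℝ be continuously differentiable and convex, G ⊆ ℝ^p nonempty closed convex, θ⋆ ∈ G, and let F = G − θ⋆ be the feasible set with conic hull F̄ (assumed closed). Suppose f satisfies the restricted strong convexity condition ⟨∇f(θ⋆ + e) − ∇f(θ⋆), e⟩ ≥ μ‖e‖₂² for all e ∈ F, with μ > 0. If θ̂ is a minimizer of f over G, then ‖θ̂ − θ⋆‖₂ ≤ (1/μ)‖Π_{F̄}(−∇f(θ⋆))‖₂. -/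
/-!
The minimiser `θhat` satisfies the first-order condition `⟪∇f θhat, θs - θhat⟫ ≥ 0`, so restricted
strong convexity applied to `e = θhat - θs` gives `μ ‖e‖² ≤ ⟪-∇f θs, e⟫`. Since `e` lies in the cone
`Fbar` and `P` is the projection of `-∇f θs` onto that cone, `⟪-∇f θs, e⟫ ≤ ‖P‖ ‖e‖`.
-/

open RealInnerProductSpace

section ConeProjection

variable {E : Type*} [NormedAddCommGroup E] [InnerProductSpace ℝ E] {K : Set E} {v P : E}

lemma two_inner_sub_norm_sq_le_of_forall_norm_sub_le (hmin : ∀ y ∈ K, ‖v - P‖ ≤ ‖v - y‖)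
    {y : E} (hy : y ∈ K) : 2 * ⟪v, y⟫ - ‖y‖ ^ 2 ≤ 2 * ⟪v, P⟫ - ‖P‖ ^ 2 := by
  have h := pow_le_pow_left₀ (norm_nonneg _) (hmin y hy) 2
  rw [norm_sub_sq_real, norm_sub_sq_real] at h
  linarith

lemma inner_eq_norm_sq_of_forall_norm_sub_le (hK : ∀ x ∈ K, ∀ t : ℝ, 0 ≤ t → t • x ∈ K)
    (hP : P ∈ K) (hmin : ∀ y ∈ K, ‖v - P‖ ≤ ‖v - y‖) : ⟪v, P⟫ = ‖P‖ ^ 2 := by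
  have hray : ∀ t : ℝ, 0 ≤ t → 2 * t * ⟪v, P⟫ - t ^ 2 * ‖P‖ ^ 2 ≤ 2 * ⟪v, P⟫ - ‖P‖ ^ 2 := by
    intro t ht
    have h := two_inner_sub_norm_sq_le_of_forall_norm_sub_le hmin (hK P hP t ht)
    rwa [real_inner_smul_right, norm_smul, mul_pow, Real.norm_eq_abs, sq_abs, ← mul_assoc] at h
  rcases eq_or_ne P 0 with rfl | hP0
  · simp
  have hb : 0 < ‖P‖ ^ 2 := by positivity
  have ha : 0 ≤ ⟪v, P⟫ := by nlinarith [hray 0 le_rfl]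
  -- `t = ⟪v, P⟫ / ‖P‖²` maximises the left side of `hray`, and the maximum exceeds the value at `t = 1`
  -- by `(⟪v, P⟫ - ‖P‖²)² / ‖P‖²`.
  have h := hray (⟪v, P⟫ / ‖P‖ ^ 2) (by positivity)
  field_simp at h
  nlinarith [sq_nonneg (⟪v, P⟫ - ‖P‖ ^ 2)]

lemma inner_le_norm_mul_norm_of_forall_norm_sub_le (hK : ∀ x ∈ K, ∀ t : ℝ, 0 ≤ t → t • x ∈ K)
    (hP : P ∈ K) (hmin : ∀ y ∈ K, ‖v - P‖ ≤ ‖v - y‖) {x : E} (hx : x ∈ K) :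
    ⟪v, x⟫ ≤ ‖P‖ * ‖x‖ := by
  rcases le_or_gt ⟪v, x⟫ 0 with hc | hc
  · exact hc.trans (by positivity)
  have hx0 : x ≠ 0 := by rintro rfl; simp at hc
  have hd : 0 < ‖x‖ ^ 2 := by positivity
  set t := ⟪v, x⟫ / ‖x‖ ^ 2
  have h := two_inner_sub_norm_sq_le_of_forall_norm_sub_le hmin (hK x hx t (by positivity))
  rw [real_inner_smul_right, norm_smul, mul_pow, Real.norm_eq_abs, sq_abs,
    inner_eq_norm_sq_of_forall_norm_sub_le hK hP hmin] at h
  have htd : t * ‖x‖ ^ 2 = ⟪v, x⟫ := div_mul_cancel₀ _ hd.ne'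
  have htc : t * ⟪v, x⟫ ≤ ‖P‖ ^ 2 := by nlinarith
  have hsq : ⟪v, x⟫ ^ 2 ≤ (‖P‖ * ‖x‖) ^ 2 := by nlinarith
  exact le_of_sq_le_sq hsq (by positivity)

end ConeProjection

lemma inner_gradient_sub_nonneg_of_isMinOn {E : Type*} [NormedAddCommGroup E]
    [InnerProductSpace ℝ E] [CompleteSpace E] {f : E → ℝ} {s : Set E} (hs : Convex ℝ s)
    {a b : E} (ha : a ∈ s) (hb : b ∈ s) (hmin : IsMinOn f s a) (hf : DifferentiableAt ℝ f a) :
    0 ≤ ⟪gradient f a, b - a⟫ := by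
  rw [gradient, InnerProductSpace.toDual_symm_apply]
  exact hmin.localize.hasFDerivWithinAt_nonneg hf.hasFDerivAt.hasFDerivWithinAt
    (sub_mem_posTangentConeAt_of_segment_subset (hs.segment_subset ha hb))

theorem stmt_5_general {p : ℕ} (f : EuclideanSpace ℝ (Fin p) → ℝ)
    (hdiff : ContDiff ℝ 1 f)
    (G : Set (EuclideanSpace ℝ (Fin p)))
    (hGconv : Convex ℝ G)
    (θs : EuclideanSpace ℝ (Fin p)) (hθs : θs ∈ G)
    (F Fbar : Set (EuclideanSpace ℝ (Fin p)))
    (hF : F = (fun x => x - θs) '' G)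
    (hFbar : Fbar = {x | ∃ t : ℝ, 0 ≤ t ∧ ∃ y ∈ F, x = t • y})
    (μ : ℝ) (hμ : 0 < μ)
    (hRSC : ∀ e ∈ F, μ * ‖e‖ ^ 2 ≤ ⟪gradient f (θs + e) - gradient f θs, e⟫)
    (θhat : EuclideanSpace ℝ (Fin p)) (hθhat : θhat ∈ G)
    (hmin : ∀ θ' ∈ G, f θhat ≤ f θ')
    (P : EuclideanSpace ℝ (Fin p)) (hP : P ∈ Fbar)
    (hproj : ∀ y ∈ Fbar, ‖-gradient f θs - P‖ ≤ ‖-gradient f θs - y‖) :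
    ‖θhat - θs‖ ≤ (1 / μ) * ‖P‖ := by
  set e := θhat - θs
  have heF : e ∈ F := hF ▸ ⟨θhat, hθhat, rfl⟩
  have hcone : ∀ x ∈ Fbar, ∀ t : ℝ, 0 ≤ t → t • x ∈ Fbar := by
    subst hFbar
    rintro _ ⟨s, hs, y, hy, rfl⟩ t ht
    exact ⟨t * s, mul_nonneg ht hs, y, hy, (mul_smul t s y).symm⟩
  have heFbar : e ∈ Fbar := hFbar ▸ ⟨1, zero_le_one, e, heF, (one_smul ℝ e).symm⟩
  have hopt : 0 ≤ ⟪gradient f θhat, θs - θhat⟫ :=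
    inner_gradient_sub_nonneg_of_isMinOn hGconv hθhat hθs (isMinOn_iff.mpr hmin)
      (hdiff.differentiable one_ne_zero θhat)
  have hstrong : μ * ‖e‖ ^ 2 ≤ ⟪-gradient f θs, e⟫ := by
    have h := hRSC e heF
    rw [add_sub_cancel, inner_sub_left] at h
    rw [← neg_sub, inner_neg_right] at hopt
    rw [inner_neg_left]
    linarith
  have hcs : ⟪-gradient f θs, e⟫ ≤ ‖P‖ * ‖e‖ :=
    inner_le_norm_mul_norm_of_forall_norm_sub_le hcone hP hproj heFbar
  rw [one_div_mul_eq_div, le_div_iff₀ hμ]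
  rcases (norm_nonneg e).eq_or_lt with he | he
  · rw [← he, zero_mul]; exact norm_nonneg P
  · nlinarith

/-- Fundamental lemma (Lemma 3.2): RSC on the feasible set gives an error bound
in terms of the projection of the negative gradient onto the feasible cone. -/
theorem stmt_5 {p : ℕ} (f : EuclideanSpace ℝ (Fin p) → ℝ)
    (hdiff : ContDiff ℝ 1 f) (hconv : ConvexOn ℝ Set.univ f)
    (G : Set (EuclideanSpace ℝ (Fin p))) (hGne : G.Nonempty) (hGclosed : IsClosed G)
    (hGconv : Convex ℝ G)
    (θs : EuclideanSpace ℝ (Fin p)) (hθs : θs ∈ G)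
    (F Fbar : Set (EuclideanSpace ℝ (Fin p)))
    (hF : F = (fun x => x - θs) '' G)
    (hFbar : Fbar = {x | ∃ t : ℝ, 0 ≤ t ∧ ∃ y ∈ F, x = t • y})
    (hFbarClosed : IsClosed Fbar)
    (μ : ℝ) (hμ : 0 < μ)
    (hRSC : ∀ e ∈ F, μ * ‖e‖ ^ 2 ≤ ⟪gradient f (θs + e) - gradient f θs, e⟫)
    (θhat : EuclideanSpace ℝ (Fin p)) (hθhat : θhat ∈ G)
    (hmin : ∀ θ' ∈ G, f θhat ≤ f θ')
    (P : EuclideanSpace ℝ (Fin p)) (hP : P ∈ Fbar)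
    (hproj : ∀ y ∈ Fbar, ‖-gradient f θs - P‖ ≤ ‖-gradient f θs - y‖) :
    ‖θhat - θs‖ ≤ (1 / μ) * ‖P‖ :=
  stmt_5_general f hdiff G hGconv θs hθs F Fbar hF hFbar μ hμ hRSC θhat hθhat hmin P hP hproj
end

section
/- Let f : ℝ^p → ℝ be convex differentiable, G nonempty closed convex, θ⋆ ∈ G, F = G − θ⋆, t > 0, and let B denote the closed unit Euclidean ball. Suppose ⟨∇f(θ⋆ + e) − ∇f(θ⋆), e⟩ ≥ μ‖e‖₂² for some μ > 0 and all e ∈ F \ tB. Let K denote the closed conic hull of F \ tB, and let θ̂ minimize f over G. Then ‖θ̂ − θ⋆‖₂ ≤ t + (1/μ)‖Π_K(−∇f(θ⋆))‖₂. -/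
open RealInnerProductSpace

/-! The minimiser `θ̂` satisfies the first-order condition `⟪∇f(θ̂), θ⋆ - θ̂⟫ ≥ 0`, so for
`e = θ̂ - θ⋆` outside the ball `tB` restricted strong convexity gives
`μ ‖e‖² ≤ ⟪∇f(θ̂) - ∇f(θ⋆), e⟫ ≤ ⟪-∇f(θ⋆), e⟫`. Since `e ∈ K` and `P = Π_K(-∇f(θ⋆))` is a nearest
point of a cone, `⟪-∇f(θ⋆), e⟫ ≤ ‖P‖ ‖e‖`, whence `‖e‖ ≤ ‖P‖ / μ`. -/

section InnerProductSpace

variable {E : Type*} [NormedAddCommGroup E] [InnerProductSpace ℝ E]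

lemma IsMinOn.inner_gradient_sub_nonneg [CompleteSpace E] {f : E → ℝ} {G : Set E} {a f' y : E}
    (hG : Convex ℝ G) (hmin : IsMinOn f G a) (hf : HasGradientAt f f' a) (ha : a ∈ G)
    (hy : y ∈ G) : 0 ≤ ⟪f', y - a⟫ := by
  have hcone := sub_mem_posTangentConeAt_of_segment_subset (hG.segment_subset ha hy)
  simpa using hmin.localize.hasFDerivWithinAt_nonneg hf.hasFDerivAt.hasFDerivWithinAt hcone

/-- Unlike `ConvexCone.hull`, not convexified: `K` is the closure of `conicHull (F \ tB)`. -/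
def conicHull (A : Set E) : Set E := {x | ∃ s : ℝ, 0 ≤ s ∧ ∃ y ∈ A, x = s • y}

lemma subset_conicHull (A : Set E) : A ⊆ conicHull A :=
  fun y hy => ⟨1, zero_le_one, y, hy, (one_smul ℝ y).symm⟩

lemma smul_mem_closure_conicHull {A : Set E} {s : ℝ} (hs : 0 ≤ s) {x : E}
    (hx : x ∈ closure (conicHull A)) : s • x ∈ closure (conicHull A) := by
  refine closure_mono ?_ (image_closure_subset_closure_image (continuous_const_smul s) ⟨x, hx, rfl⟩)
  rintro _ ⟨_, ⟨r, hr, y, hy, rfl⟩, rfl⟩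
  exact ⟨s * r, mul_nonneg hs hr, y, hy, smul_smul s r y⟩

lemma inner_sq_le_of_forall_norm_sub_le_norm_sub_smul {v x : E} {d : ℝ} (hc : 0 ≤ ⟪v, x⟫)
    (h : ∀ s : ℝ, 0 ≤ s → d ≤ ‖v - s • x‖) (hd : 0 ≤ d) :
    ⟪v, x⟫ ^ 2 ≤ ‖x‖ ^ 2 * (‖v‖ ^ 2 - d ^ 2) := by
  rcases eq_or_ne x 0 with rfl | hx
  · simp
  have hn : 0 < ‖x‖ ^ 2 := by positivity
  -- the distance from `v` to the ray through `x` is attained at `s = ⟪v, x⟫ / ‖x‖²`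
  have hray := pow_le_pow_left₀ hd (h (⟪v, x⟫ / ‖x‖ ^ 2) (by positivity)) 2
  rw [norm_sub_sq_real, real_inner_smul_right, norm_smul, Real.norm_eq_abs, mul_pow, sq_abs]
    at hray
  have key : ‖v‖ ^ 2 - 2 * (⟪v, x⟫ / ‖x‖ ^ 2 * ⟪v, x⟫) + (⟪v, x⟫ / ‖x‖ ^ 2) ^ 2 * ‖x‖ ^ 2
      = ‖v‖ ^ 2 - ⟪v, x⟫ ^ 2 / ‖x‖ ^ 2 := by
    field_simp
    ring
  rw [key, le_sub_iff_add_le, ← le_sub_iff_add_le', div_le_iff₀ hn] at hray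
  linarith

/-- Comparing `P` with its own ray forces `⟪v, P⟫ = ‖P‖²`, so `‖v‖² - ‖v - P‖² = ‖P‖²`, and no
ray of `K` comes closer to `v`. Without convexity of `K` the usual criterion `⟪v - P, x⟫ ≤ 0`
can fail. -/
lemma inner_le_norm_mul_norm_of_nearest_mem_cone {K : Set E}
    (hK : ∀ s : ℝ, 0 ≤ s → ∀ x ∈ K, s • x ∈ K) {v P : E} (hP : P ∈ K)
    (hproj : ∀ y ∈ K, ‖v - P‖ ≤ ‖v - y‖) {x : E} (hx : x ∈ K) : ⟪v, x⟫ ≤ ‖P‖ * ‖x‖ := by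
  have hray {y : E} (hy : y ∈ K) (hc : 0 ≤ ⟪v, y⟫) :=
    inner_sq_le_of_forall_norm_sub_le_norm_sub_smul hc
      (fun s hs => hproj _ (hK s hs y hy)) (norm_nonneg _)
  have hvP : ⟪v, P⟫ = ‖P‖ ^ 2 := by
    have h0 := pow_le_pow_left₀ (norm_nonneg _) (hproj 0 (by simpa using hK 0 le_rfl P hP)) 2
    rw [sub_zero, norm_sub_sq_real] at h0
    have hP := hray hP (by nlinarith [norm_nonneg P])
    rw [norm_sub_sq_real] at hP
    nlinarith [sq_nonneg (⟪v, P⟫ - ‖P‖ ^ 2)]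
  have hdist : ‖v‖ ^ 2 - ‖v - P‖ ^ 2 = ‖P‖ ^ 2 := by
    rw [norm_sub_sq_real, hvP]; ring
  rcases le_total ⟪v, x⟫ 0 with hc | hc
  · exact hc.trans (by positivity)
  · have := hray hx hc
    rw [hdist, ← mul_pow] at this
    exact abs_le_of_sq_le_sq' (by linarith) (by positivity) |>.2
end InnerProductSpace

theorem stmt_7_general {p : ℕ} (f : EuclideanSpace ℝ (Fin p) → ℝ)
    (hdiff : Differentiable ℝ f)
    (G : Set (EuclideanSpace ℝ (Fin p)))
    (hGconv : Convex ℝ G)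
    (θs : EuclideanSpace ℝ (Fin p)) (hθs : θs ∈ G)
    (F : Set (EuclideanSpace ℝ (Fin p))) (hF : F = (fun x => x - θs) '' G)
    (t : ℝ) (ht : 0 < t)
    (μ : ℝ) (hμ : 0 < μ)
    (hRSC : ∀ e ∈ F \ Metric.closedBall (0 : EuclideanSpace ℝ (Fin p)) t,
      μ * ‖e‖ ^ 2 ≤ ⟪gradient f (θs + e) - gradient f θs, e⟫)
    (K : Set (EuclideanSpace ℝ (Fin p)))
    (hK : K = closure {x | ∃ s : ℝ, 0 ≤ s ∧
      ∃ y ∈ F \ Metric.closedBall (0 : EuclideanSpace ℝ (Fin p)) t, x = s • y})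
    (θhat : EuclideanSpace ℝ (Fin p)) (hθhat : θhat ∈ G)
    (hmin : ∀ θ' ∈ G, f θhat ≤ f θ')
    (P : EuclideanSpace ℝ (Fin p)) (hP : P ∈ K)
    (hproj : ∀ y ∈ K, ‖-gradient f θs - P‖ ≤ ‖-gradient f θs - y‖) :
    ‖θhat - θs‖ ≤ t + (1 / μ) * ‖P‖ := by
  rw [one_div_mul_eq_div]
  rcases le_or_gt ‖θhat - θs‖ t with hle | hgt
  · have : 0 ≤ ‖P‖ / μ := by positivity
    linarith
  have he : θhat - θs ∈ F \ Metric.closedBall 0 t :=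
    ⟨hF ▸ ⟨θhat, hθhat, rfl⟩, by simpa using hgt⟩
  have hopt : 0 ≤ ⟪gradient f θhat, θs - θhat⟫ :=
    (isMinOn_iff.2 hmin).inner_gradient_sub_nonneg hGconv (hdiff θhat).hasGradientAt hθhat hθs
  have hrsc := hRSC _ he
  rw [add_sub_cancel, inner_sub_left] at hrsc
  rw [← neg_sub, inner_neg_right] at hopt
  have hcone : ⟪-gradient f θs, θhat - θs⟫ ≤ ‖P‖ * ‖θhat - θs‖ := by
    replace hK : K = closure (conicHull (F \ Metric.closedBall 0 t)) := hK
    subst hK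
    exact inner_le_norm_mul_norm_of_nearest_mem_cone
      (fun s hs x hx => smul_mem_closure_conicHull hs hx) hP hproj
      (subset_closure (subset_conicHull _ he))
  rw [inner_neg_left] at hcone
  have hμe : μ * ‖θhat - θs‖ ≤ ‖P‖ :=
    le_of_mul_le_mul_right (by nlinarith) (ht.trans hgt)
  linarith [(le_div_iff₀' hμ).2 hμe]

/-- Lemma 5.1 (mismatched constraint): error bound with RSC holding only outside
a ball of radius t. -/
theorem stmt_7 {p : ℕ} (f : EuclideanSpace ℝ (Fin p) → ℝ)
    (hdiff : Differentiable ℝ f) (hconv : ConvexOn ℝ Set.univ f)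
    (G : Set (EuclideanSpace ℝ (Fin p))) (hGne : G.Nonempty) (hGclosed : IsClosed G)
    (hGconv : Convex ℝ G)
    (θs : EuclideanSpace ℝ (Fin p)) (hθs : θs ∈ G)
    (F : Set (EuclideanSpace ℝ (Fin p))) (hF : F = (fun x => x - θs) '' G)
    (t : ℝ) (ht : 0 < t)
    (μ : ℝ) (hμ : 0 < μ)
    (hRSC : ∀ e ∈ F \ Metric.closedBall (0 : EuclideanSpace ℝ (Fin p)) t,
      μ * ‖e‖ ^ 2 ≤ ⟪gradient f (θs + e) - gradient f θs, e⟫)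
    (K : Set (EuclideanSpace ℝ (Fin p)))
    (hK : K = closure {x | ∃ s : ℝ, 0 ≤ s ∧
      ∃ y ∈ F \ Metric.closedBall (0 : EuclideanSpace ℝ (Fin p)) t, x = s • y})
    (θhat : EuclideanSpace ℝ (Fin p)) (hθhat : θhat ∈ G)
    (hmin : ∀ θ' ∈ G, f θhat ≤ f θ')
    (P : EuclideanSpace ℝ (Fin p)) (hP : P ∈ K)
    (hproj : ∀ y ∈ K, ‖-gradient f θs - P‖ ≤ ‖-gradient f θs - y‖) :
    ‖θhat - θs‖ ≤ t + (1 / μ) * ‖P‖ :=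
  stmt_7_general f hdiff G hGconv θs hθs F hF t ht μ hμ hRSC K hK θhat hθhat hmin P hP hproj
end
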